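/- Suppose Q has signature (1,n) on ℝ^{1+n}, κ₀ and A₀ both lie in the closure of the forward positive cone (Q(κ₀,κ₀) ≥ 0, Q(A₀,A₀) ≥ 0, Q(κ₀,ω) ≥ 0, Q(A₀,ω) ≥ 0 for a fixed ω with Q(ω,ω) > 0). If A = A₀ + Σᵢ aᵢEᵢ with aᵢ ≤ 0 in the orthogonal extension by (-1)-classes and κ = κ₀ + ΣEᵢ, then Q̃(κ, A) ≥ 0, where Q̃ is the extended form. -/
import Mathlib


/-- The intersection form of signature `(1,n)` on `ℝ^{1+n}`. -/
def QformR (n : ℕ) (v w : Fin (n + 1) → ℝ) : ℝ :=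
  v 0 * w 0 - ∑ i : Fin n, v i.succ * w i.succ

lemma lightcone_key (v0 w0 o0 Sv Sw So P Pv Pw : ℝ)
    (hSv : 0 ≤ Sv) (hSw : 0 ≤ Sw) (hSo : 0 ≤ So)
    (h1 : Sv ≤ v0 ^ 2) (h2 : Sw ≤ w0 ^ 2) (h3 : So < o0 ^ 2)
    (cs : P ^ 2 ≤ Sv * Sw) (csv : Pv ^ 2 ≤ Sv * So) (csw : Pw ^ 2 ≤ Sw * So)
    (hv : Pv ≤ v0 * o0) (hw : Pw ≤ w0 * o0) : P ≤ v0 * w0 := by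
  have hvo : 0 ≤ v0 * o0 := by
    by_contra h
    push_neg at h
    have hv0 : v0 ≠ 0 := by rintro rfl; simp at h
    nlinarith [sq_nonneg v0, pow_pos (abs_pos.mpr hv0) 2, sq_abs v0]
  have hwo : 0 ≤ w0 * o0 := by
    by_contra h
    push_neg at h
    have hw0 : w0 ≠ 0 := by rintro rfl; simp at h
    nlinarith [sq_nonneg w0, pow_pos (abs_pos.mpr hw0) 2, sq_abs w0]
  have ho : 0 < o0 ^ 2 := lt_of_le_of_lt hSo h3
  have hvw : 0 ≤ v0 * w0 := by nlinarith
  nlinarith [sq_nonneg (P - v0 * w0), sq_nonneg (P + v0 * w0)]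

/-- Case 5 of the paper: if `κ₀, A₀` lie in the closure of the forward positive cone of the
`(1,n)` form (witnessed by `ω` of positive square), and `A = A₀ + Σᵢ aᵢEᵢ` with `aᵢ ≤ 0`
in the orthogonal extension by `(-1)`-classes and `κ = κ₀ + ΣEᵢ`, then the extended pairing
`Q̃(κ,A) = Q(κ₀,A₀) - Σᵢ aᵢ` is nonnegative. -/
theorem stmt_13 (n k : ℕ) (κ₀ A₀ ω : Fin (n + 1) → ℝ)
    (hκκ : 0 ≤ QformR n κ₀ κ₀) (hAA : 0 ≤ QformR n A₀ A₀)
    (hωω : 0 < QformR n ω ω) (hκω : 0 ≤ QformR n κ₀ ω) (hAω : 0 ≤ QformR n A₀ ω)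
    (a : Fin k → ℝ) (ha : ∀ i, a i ≤ 0) :
    0 ≤ QformR n κ₀ A₀ - ∑ i, a i := by
  have hsum : ∑ i, a i ≤ 0 := Finset.sum_nonpos fun i _ => ha i
  have hQ : 0 ≤ QformR n κ₀ A₀ := by
    unfold QformR at *
    have snn : ∀ v : Fin (n+1) → ℝ, (0:ℝ) ≤ ∑ i : Fin n, v i.succ * v i.succ :=
      fun v => Finset.sum_nonneg fun i _ => mul_self_nonneg _
    have sq' : ∀ v : Fin (n+1) → ℝ, (∑ i : Fin n, v i.succ * v i.succ)
        = ∑ i : Fin n, (v i.succ) ^ 2 := by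
      intro v; exact Finset.sum_congr rfl fun i _ => (sq (v i.succ)).symm
    have cs : ∀ v w : Fin (n+1) → ℝ, (∑ i : Fin n, v i.succ * w i.succ) ^ 2
        ≤ (∑ i : Fin n, v i.succ * v i.succ) * (∑ i : Fin n, w i.succ * w i.succ) := by
      intro v w
      rw [sq' v, sq' w]
      exact Finset.sum_mul_sq_le_sq_mul_sq _ _ _
    have := lightcone_key (κ₀ 0) (A₀ 0) (ω 0)
      (∑ i : Fin n, κ₀ i.succ * κ₀ i.succ) (∑ i : Fin n, A₀ i.succ * A₀ i.succ)
      (∑ i : Fin n, ω i.succ * ω i.succ) (∑ i : Fin n, κ₀ i.succ * A₀ i.succ)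
      (∑ i : Fin n, κ₀ i.succ * ω i.succ) (∑ i : Fin n, A₀ i.succ * ω i.succ)
      (snn κ₀) (snn A₀) (snn ω) (by nlinarith [sq (κ₀ 0)]) (by nlinarith)
      (by nlinarith) (cs κ₀ A₀) (cs κ₀ ω) (cs A₀ ω) (by linarith) (by linarith)
    linarith
  linarith
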